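/- arXiv:2404.00222 — 4 statements merged into one kernel-verified Lean document; each statement's English description precedes it below -/
import Mathlib

section
/- Let q = 2^k for a positive integer k, and let f : F_q → F_q be a function on the finite field with q elements. Then f preserves positivity on M_2(F_q) if and only if f is a bijective monomial, i.e., there exist c ∈ F_q with c ≠ 0 and an integer n with 1 ≤ n ≤ q−1 and gcd(n, q−1) = 1 such that f(x) = c·x^n for all x ∈ F_q. -/
/-- An element of a field is *positive* if it is a nonzero square. -/
def IsPos {F : Type*} [Field F] (x : F) : Prop := ∃ y : F, y ≠ 0 ∧ y ^ 2 = x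

/-- The `r`-th leading principal minor of a square matrix (the determinant of the
top-left `(r+1) × (r+1)` submatrix). -/
def leadingMinor {F : Type*} [CommRing F] {n : ℕ} (A : Matrix (Fin n) (Fin n) F)
    (r : Fin n) : F :=
  (A.submatrix (Fin.castLE r.isLt) (Fin.castLE r.isLt)).det

/-- A matrix over a finite field is positive definite if it is symmetric and all its
leading principal minors are positive (nonzero squares). -/
def IsPosDef {F : Type*} [Field F] {n : ℕ} (A : Matrix (Fin n) (Fin n) F) : Prop :=
  A.IsSymm ∧ ∀ r : Fin n, IsPos (leadingMinor A r)

/-- The entrywise application `f[A]` of `f` to the matrix `A`. -/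
def entrywiseMap {F : Type*} {n : ℕ} (f : F → F) (A : Matrix (Fin n) (Fin n) F) :
    Matrix (Fin n) (Fin n) F := Matrix.of fun i j => f (A i j)

/-- `f` preserves positivity on `n × n` matrices. -/
def PreservesPos {F : Type*} [Field F] (n : ℕ) (f : F → F) : Prop :=
  ∀ A : Matrix (Fin n) (Fin n) F, IsPosDef A → IsPosDef (entrywiseMap f A)

/-!
In characteristic `2` every element of `𝔽_q` is a square, so positivity means being nonzero, and
`f` preserves positivity on `M₂` iff `a ≠ 0`, `ad ≠ b²` force `f a ≠ 0` and `f a f d ≠ (f b)²`.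
Taking `b = a` shows that `f` is injective, hence bijective with `f 0 = 0`. Bijectivity upgrades
the implication to `f a f d = (f b)² ↔ ad = b²` for `a ≠ 0`, and writing `xy = b²` then gives
`f x f y = f 1 f (xy)`. Thus `f / f 1` restricts to an injective endomorphism of the cyclic group
`𝔽_q^×`, i.e. a power map with exponent coprime to `q - 1`.
-/

open Function

theorem coprime_natCard_of_pow_left_injective {G : Type*} [Group G] [Finite G] {n : ℕ}
    (h : Injective (· ^ n : G → G)) : n.Coprime (Nat.card G) := by
  refine Nat.coprime_of_dvd fun p hp hpn hpG => ?_
  have : Fact p.Prime := ⟨hp⟩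
  obtain ⟨g, hg⟩ := exists_prime_orderOf_dvd_card' p hpG
  have hg1 : g = 1 := h <| by
    obtain ⟨t, rfl⟩ := hpn
    simp only [one_pow, pow_mul, ← hg, pow_orderOf_eq_one]
  exact hp.one_lt.ne' (by rw [← hg, hg1, orderOf_one])

theorem MonoidHom.exists_pow_of_injective {G : Type*} [Group G] [Finite G] [IsCyclic G]
    (σ : G →* G) (hσ : Injective σ) :
    ∃ n, 1 ≤ n ∧ n ≤ Nat.card G ∧ n.Coprime (Nat.card G) ∧ ∀ g, σ g = g ^ n := by
  obtain ⟨m, hm⟩ := σ.map_cyclic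
  have hN : (0 : ℤ) < Nat.card G := by exact_mod_cast Nat.card_pos
  obtain ⟨r, hr⟩ : ∃ r : ℕ, (r : ℤ) = (m - 1) % Nat.card G :=
    ⟨_, Int.toNat_of_nonneg (Int.emod_nonneg _ hN.ne')⟩
  have hrN : r < Nat.card G := by have := Int.emod_lt_of_pos (m - 1) hN; omega
  have hσr : ∀ g, σ g = g ^ (r + 1) := fun g => by
    rw [hm, pow_succ, ← zpow_natCast, hr, zpow_mod_natCard, ← zpow_add_one, sub_add_cancel]
  refine ⟨r + 1, by omega, hrN, coprime_natCard_of_pow_left_injective ?_, hσr⟩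
  rwa [← funext hσr]

theorem MonoidWithZeroHom.exists_pow_of_injective {F : Type*} [Field F] [Finite F]
    (g : F →*₀ F) (hg : Injective g) :
    ∃ n, 1 ≤ n ∧ n ≤ Nat.card F - 1 ∧ n.Coprime (Nat.card F - 1) ∧ ∀ x, g x = x ^ n := by
  obtain ⟨n, hn, hnq, hcop, hgn⟩ :=
    (Units.map (g : F →* F)).exists_pow_of_injective (Units.map_injective hg)
  rw [Nat.card_units] at hnq hcop
  refine ⟨n, hn, hnq, hcop, fun x => ?_⟩
  rcases eq_or_ne x 0 with rfl | hx
  · rw [map_zero, zero_pow (by omega)]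
  · simpa using congrArg Units.val (hgn (Units.mk0 x hx))

theorem FiniteField.pow_injective_of_coprime {F : Type*} [Field F] [Finite F] {n : ℕ}
    (hn : n ≠ 0) (h : n.Coprime (Nat.card F - 1)) : Injective (· ^ n : F → F) := by
  have hunits : Injective (· ^ n : Fˣ → Fˣ) :=
    (Nat.Coprime.pow_left_bijective (by rw [Nat.card_units]; exact h.symm)).injective
  intro x y hxy
  simp only at hxy
  rcases eq_or_ne x 0 with rfl | hx
  · rw [zero_pow hn, eq_comm, pow_eq_zero_iff hn] at hxy
    exact hxy.symm
  rcases eq_or_ne y 0 with rfl | hy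
  · rwa [zero_pow hn, pow_eq_zero_iff hn] at hxy
  simpa using congrArg Units.val (@hunits (Units.mk0 x hx) (Units.mk0 y hy) (by ext; simpa))

theorem charP_two_of_card_eq_two_pow {F : Type*} [Field F] [Fintype F] {k : ℕ}
    (hcard : Fintype.card F = 2 ^ k) : CharP F 2 := by
  refine CharTwo.of_one_ne_zero_of_two_eq_zero one_ne_zero (eq_zero_of_pow_eq_zero (n := k) ?_)
  exact_mod_cast hcard ▸ FiniteField.cast_card_eq_zero F

theorem leadingMinor_fin_two_zero {R : Type*} [CommRing R] (A : Matrix (Fin 2) (Fin 2) R) :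
    leadingMinor A 0 = A 0 0 := by
  simp [leadingMinor]

theorem leadingMinor_fin_two_one {R : Type*} [CommRing R] (A : Matrix (Fin 2) (Fin 2) R) :
    leadingMinor A 1 = A 0 0 * A 1 1 - A 0 1 * A 1 0 := by
  simp [leadingMinor, Matrix.det_fin_two]

section CharTwo

variable {F : Type*} [Field F] [Finite F] [CharP F 2]

theorem isPos_iff_ne_zero {x : F} : IsPos x ↔ x ≠ 0 := by
  refine ⟨fun ⟨y, hy, hyx⟩ => hyx ▸ pow_ne_zero 2 hy, fun hx => ?_⟩
  obtain ⟨y, rfl⟩ := isSquare_of_charTwo' x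
  exact ⟨y, fun hy => hx (by simp [hy]), sq y⟩

theorem isPosDef_fin_two_iff (A : Matrix (Fin 2) (Fin 2) F) :
    IsPosDef A ↔ A 1 0 = A 0 1 ∧ A 0 0 ≠ 0 ∧ A 0 0 * A 1 1 ≠ A 0 1 * A 0 1 := by
  simp only [IsPosDef, Matrix.IsSymm.ext_iff, Fin.forall_fin_two, leadingMinor_fin_two_zero,
    leadingMinor_fin_two_one, isPos_iff_ne_zero, sub_ne_zero, true_and, and_true]
  rw [and_iff_left_of_imp Eq.symm]
  exact and_congr_right fun h => by rw [h]

theorem preservesPos_two_iff {f : F → F} :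
    PreservesPos 2 f ↔ ∀ a b d : F, a ≠ 0 → a * d ≠ b * b → f a ≠ 0 ∧ f a * f d ≠ f b * f b := by
  simp only [PreservesPos, isPosDef_fin_two_iff]
  refine ⟨fun hf a b d ha had => ?_, fun hf A ⟨hsym, h0, hd⟩ => ?_⟩
  · simpa [entrywiseMap] using hf !![a, b; b, d] (by simp [ha, had])
  · simpa [entrywiseMap, hsym] using hf _ _ _ h0 hd

theorem preservesPos_two_const_mul_pow {c : F} {n : ℕ} (hc : c ≠ 0)
    (hinj : Injective (· ^ n : F → F)) : PreservesPos 2 (fun x => c * x ^ n) := by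
  refine preservesPos_two_iff.2 fun a b d ha had =>
    ⟨mul_ne_zero hc (pow_ne_zero n ha), fun h => had (hinj ?_)⟩
  apply mul_left_cancel₀ (mul_self_ne_zero.2 hc)
  simp only [mul_pow]
  linear_combination h

namespace PreservesPos

variable {f : F → F} (hf : PreservesPos 2 f)
include hf

theorem map_ne_zero {a : F} (ha : a ≠ 0) : f a ≠ 0 :=
  (preservesPos_two_iff.1 hf a 0 1 ha (by simpa using ha)).1

theorem mul_eq_of_map_mul_eq {a b d : F} (ha : a ≠ 0) (h : f a * f d = f b * f b) :
    a * d = b * b :=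
  by_contra fun had => (preservesPos_two_iff.1 hf a b d ha had).2 h

theorem injective : Injective f := by
  have eq_of_ne_zero : ∀ x y, x ≠ 0 → f x = f y → x = y := fun x y hx hxy =>
    (mul_left_cancel₀ hx (hf.mul_eq_of_map_mul_eq hx (by rw [hxy]))).symm
  intro x y hxy
  rcases eq_or_ne x 0 with rfl | hx
  · rcases eq_or_ne y 0 with rfl | hy
    · rfl
    · exact (eq_of_ne_zero y 0 hy hxy.symm).symm
  · exact eq_of_ne_zero x y hx hxy

theorem map_zero : f 0 = 0 := by
  obtain ⟨z, hz⟩ := Finite.surjective_of_injective hf.injective 0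
  rcases eq_or_ne z 0 with rfl | hz0
  · exact hz
  · exact absurd hz (hf.map_ne_zero hz0)

theorem map_mul_eq_iff {a b d : F} (ha : a ≠ 0) : f a * f d = f b * f b ↔ a * d = b * b := by
  refine ⟨hf.mul_eq_of_map_mul_eq ha, fun had => ?_⟩
  obtain ⟨d', hd'⟩ := Finite.surjective_of_injective hf.injective (f b * f b / f a)
  have h' : f a * f d' = f b * f b := by rw [hd', mul_div_cancel₀ _ (hf.map_ne_zero ha)]
  rwa [mul_left_cancel₀ ha ((hf.mul_eq_of_map_mul_eq ha h').trans had.symm)] at h'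

theorem map_mul (x y : F) : f x * f y = f 1 * f (x * y) := by
  rcases eq_or_ne x 0 with rfl | hx
  · rw [hf.map_zero, zero_mul, zero_mul, hf.map_zero, mul_zero]
  obtain ⟨b, hb⟩ := isSquare_of_charTwo' (x * y)
  rw [(hf.map_mul_eq_iff hx).2 hb, (hf.map_mul_eq_iff one_ne_zero).2 (by rw [one_mul, hb])]

theorem exists_monoidWithZeroHom : ∃ g : F →*₀ F, Injective g ∧ ∀ x, f x = f 1 * g x := by
  have hf1 : f 1 ≠ 0 := hf.map_ne_zero one_ne_zero
  refine ⟨{ toFun := fun x => (f 1)⁻¹ * f x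
            map_zero' := by rw [hf.map_zero, mul_zero]
            map_one' := inv_mul_cancel₀ hf1
            map_mul' := fun x y => ?_ }, ?_, ?_⟩
  · rw [mul_mul_mul_comm, hf.map_mul, mul_assoc, inv_mul_cancel_left₀ hf1]
  · exact fun x y h => hf.injective (mul_left_cancel₀ (inv_ne_zero hf1) h)
  · exact fun x => (mul_inv_cancel_left₀ hf1 _).symm

end PreservesPos

end CharTwo

theorem stmt0_general {F : Type*} [Field F] [Fintype F] (k : ℕ)
    (hcard : Fintype.card F = 2 ^ k) (f : F → F) :
    PreservesPos 2 f ↔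
      ∃ (c : F) (n : ℕ), c ≠ 0 ∧ 1 ≤ n ∧ n ≤ 2 ^ k - 1 ∧ Nat.gcd n (2 ^ k - 1) = 1 ∧
        ∀ x : F, f x = c * x ^ n := by
  have : CharP F 2 := charP_two_of_card_eq_two_pow hcard
  have hq : Nat.card F - 1 = 2 ^ k - 1 := by rw [Nat.card_eq_fintype_card, hcard]
  constructor
  · intro hf
    obtain ⟨g, hg, hfg⟩ := hf.exists_monoidWithZeroHom
    obtain ⟨n, hn, hnq, hcop, hgn⟩ := g.exists_pow_of_injective hg
    exact ⟨f 1, n, hf.map_ne_zero one_ne_zero, hn, hq ▸ hnq, hq ▸ hcop,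
      fun x => by rw [hfg, hgn]⟩
  · rintro ⟨c, n, hc, hn, -, hcop, hfc⟩
    obtain rfl : f = _ := funext hfc
    exact preservesPos_two_const_mul_pow hc
      (FiniteField.pow_injective_of_coprime (by omega) (hq ▸ hcop))

/-- over `F = 𝔽_{2^k}`, `f` preserves positivity on `M_2(F)` iff `f` is a
bijective monomial `x ↦ c x^n` with `c ≠ 0`, `1 ≤ n ≤ q − 1`, and `gcd(n, q−1) = 1`. -/
theorem stmt0 {F : Type*} [Field F] [Fintype F] (k : ℕ) (hk : 1 ≤ k)
    (hcard : Fintype.card F = 2 ^ k) (f : F → F) :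
    PreservesPos 2 f ↔
      ∃ (c : F) (n : ℕ), c ≠ 0 ∧ 1 ≤ n ∧ n ≤ 2 ^ k - 1 ∧ Nat.gcd n (2 ^ k - 1) = 1 ∧
        ∀ x : F, f x = c * x ^ n :=
  stmt0_general k hcard f
end

section
/- Let q be a prime power with q ≡ 1 (mod 4). Then there exists a positive definite matrix A ∈ M_2(F_q) that does not admit a Cholesky decomposition, i.e., there is no lower triangular matrix L ∈ M_2(F_q) with all diagonal entries positive such that A = L·L^T. -/
/-!
A Cholesky factor `L` of `A` satisfies `A₀₀ = L₀₀²`, so `A₀₀` is a fourth power as soon as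
`L₀₀` is a nonzero square. When `4 ∣ q - 1` the cyclic group `F_qˣ` has a square that is not
a fourth power (the square of a generator), and the scalar matrix with that entry is positive
definite but has no Cholesky decomposition.
-/

open Matrix

theorem IsCyclic.exists_forall_pow_four_ne_sq {G : Type*} [Group G] [Finite G] [IsCyclic G]
    (h4 : 4 ∣ Nat.card G) : ∃ g : G, ∀ u : G, u ^ 4 ≠ g ^ 2 := by
  obtain ⟨g, hg⟩ := IsCyclic.exists_ofOrder_eq_natCard (α := G)
  obtain ⟨k, hk⟩ := h4
  refine ⟨g, fun u hu => ?_⟩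
  have hgk : g ^ (2 * k) = 1 := by
    rw [pow_mul, ← hu, ← pow_mul, ← hk, pow_card_eq_one']
  have hk0 : 0 < k := by have := Nat.card_pos (α := G); omega
  have := Nat.le_of_dvd (by omega) (hg ▸ orderOf_dvd_of_pow_eq_one hgk)
  omega

theorem IsPos.mul {F : Type*} [Field F] {a b : F} (ha : IsPos a) (hb : IsPos b) :
    IsPos (a * b) := by
  obtain ⟨x, hx, rfl⟩ := ha
  obtain ⟨y, hy, rfl⟩ := hb
  exact ⟨x * y, mul_ne_zero hx hy, mul_pow x y 2⟩

theorem isPos_one {F : Type*} [Field F] : IsPos (1 : F) := ⟨1, one_ne_zero, one_pow 2⟩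

theorem FiniteField.exists_isPos_forall_pow_four_ne {F : Type*} [Field F] [Fintype F]
    (hq : Fintype.card F % 4 = 1) : ∃ t : F, IsPos t ∧ ∀ y : F, y ^ 4 ≠ t := by
  have h4 : 4 ∣ Nat.card Fˣ := by
    rw [Nat.card_units, Nat.card_eq_fintype_card]
    have : 2 ≤ Fintype.card F := Fintype.one_lt_card
    omega
  obtain ⟨g, hg⟩ := IsCyclic.exists_forall_pow_four_ne_sq h4
  refine ⟨(g : F) ^ 2, ⟨g, g.ne_zero, rfl⟩, fun y hy => ?_⟩
  have hy0 : y ≠ 0 := by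
    rintro rfl
    exact pow_ne_zero 2 g.ne_zero (by simpa using hy.symm)
  exact hg (Units.mk0 y hy0) (Units.ext (by simpa using hy))

theorem isPosDef_diagonal {F : Type*} [Field F] {n : ℕ} {d : Fin n → F}
    (hd : ∀ i, IsPos (d i)) : IsPosDef (diagonal d) := by
  refine ⟨isSymm_diagonal d, fun r => ?_⟩
  rw [leadingMinor, submatrix_diagonal _ _ (Fin.castLE_injective _), det_diagonal]
  exact Finset.prod_induction _ IsPos (fun _ _ => IsPos.mul) isPos_one fun i _ => hd _

theorem mul_transpose_apply_zero_zero_of_lower_triangular {R : Type*} [Semiring R] {n : ℕ}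
    {L : Matrix (Fin (n + 1)) (Fin (n + 1)) R} (hL : ∀ i j, i < j → L i j = 0) :
    (L * Lᵀ) 0 0 = L 0 0 ^ 2 := by
  rw [mul_apply, Fin.sum_univ_succ, Finset.sum_eq_zero fun j _ => ?_, add_zero, sq]
  · rfl
  · rw [hL 0 j.succ (Fin.succ_pos j), zero_mul]

/-- if `q ≡ 1 (mod 4)`, there is a positive definite `A ∈ M_2(F_q)` that
admits no Cholesky decomposition `A = L Lᵀ` with `L` lower triangular having positive
diagonal entries. -/
theorem stmt10 {F : Type*} [Field F] [Fintype F] (hq : Fintype.card F % 4 = 1) :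
    ∃ A : Matrix (Fin 2) (Fin 2) F, IsPosDef A ∧
      ¬ ∃ L : Matrix (Fin 2) (Fin 2) F,
          (∀ i j : Fin 2, i < j → L i j = 0) ∧ (∀ i : Fin 2, IsPos (L i i)) ∧
          A = L * L.transpose := by
  obtain ⟨t, ht, hnot⟩ := FiniteField.exists_isPos_forall_pow_four_ne hq
  refine ⟨diagonal fun _ => t, isPosDef_diagonal fun _ => ht, ?_⟩
  rintro ⟨L, hlower, hdiag, hA⟩
  obtain ⟨y, -, hy⟩ := hdiag 0
  apply hnot y
  calc y ^ 4 = L 0 0 ^ 2 := by rw [← hy]; ring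
    _ = (L * Lᵀ) 0 0 := (mul_transpose_apply_zero_zero_of_lower_triangular hlower).symm
    _ = t := by rw [← hA]; rfl
end

section
/- Let q be a prime power that is even or satisfies q ≡ 3 (mod 4), and let f : F_q → F_q preserve positivity on M_2(F_q). Then the restriction of f to F_q^+ is a bijection of F_q^+ onto itself, and f(0) = 0. -/
section Aux
variable {F : Type*} [Field F]

lemma isPos_ne_zero {x : F} (h : IsPos x) : x ≠ 0 := by
  obtain ⟨y, hy, rfl⟩ := h; exact pow_ne_zero 2 hy

lemma not_isPos_zero : ¬ IsPos (0 : F) := fun h => isPos_ne_zero h rfl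

lemma IsPos.mul_s13 {x y : F} (hx : IsPos x) (hy : IsPos y) : IsPos (x * y) := by
  obtain ⟨a, ha, rfl⟩ := hx; obtain ⟨b, hb, rfl⟩ := hy
  exact ⟨a * b, mul_ne_zero ha hb, by ring⟩

lemma IsPos.inv {x : F} (hx : IsPos x) : IsPos x⁻¹ := by
  obtain ⟨a, ha, rfl⟩ := hx
  exact ⟨a⁻¹, inv_ne_zero ha, by rw [← inv_pow]⟩

lemma isPos_of_isSquare {x : F} (hx : x ≠ 0) (h : IsSquare x) : IsPos x := by
  obtain ⟨r, rfl⟩ := h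
  exact ⟨r, fun h => hx (by simp [h]), (pow_two r).trans rfl⟩

lemma lm_zero (A : Matrix (Fin 2) (Fin 2) F) : leadingMinor A 0 = A 0 0 := by
  simp [leadingMinor, Matrix.det_fin_one]

lemma lm_one (A : Matrix (Fin 2) (Fin 2) F) :
    leadingMinor A 1 = A 0 0 * A 1 1 - A 0 1 * A 1 0 := by
  simp [leadingMinor, Matrix.det_fin_two]

lemma isPosDef_of (a b : F) (h1 : IsPos a) (h2 : IsPos (a * a - b * b)) :
    IsPosDef !![a, b; b, a] := by
  constructor
  · refine Matrix.ext fun i j => ?_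
    fin_cases i <;> fin_cases j <;> simp
  · intro r
    fin_cases r
    · show IsPos (leadingMinor !![a, b; b, a] 0)
      rw [lm_zero]; simpa using h1
    · show IsPos (leadingMinor !![a, b; b, a] 1)
      rw [lm_one]; simpa using h2

lemma key {f : F → F} (hpres : PreservesPos 2 f) {a b : F}
    (ha : IsPos a) (hd : IsPos (a * a - b * b)) :
    IsPos (f a) ∧ IsPos (f a * f a - f b * f b) := by
  have h := hpres _ (isPosDef_of a b ha hd)
  have h0 := h.2 0
  have h1 := h.2 1
  rw [lm_zero] at h0
  rw [lm_one] at h1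
  simp [entrywiseMap] at h0 h1
  exact ⟨h0, h1⟩

end Aux

section Aux2
variable {F : Type*} [Field F] [Fintype F]

lemma dich (hq : Even (Fintype.card F) ∨ Fintype.card F % 4 = 3) {x : F} (hx : x ≠ 0) :
    IsPos x ∨ IsPos (-x) := by
  rcases hq with h2 | h3
  · left
    have hchar : ringChar F = 2 :=
      FiniteField.even_card_iff_char_two.mpr (Nat.even_iff.mp h2)
    exact isPos_of_isSquare hx (FiniteField.isSquare_of_char_two hchar x)
  · have hchar : ringChar F ≠ 2 := by
      intro h
      have := FiniteField.even_card_iff_char_two.mp h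
      omega
    rcases FiniteField.pow_dichotomy hchar hx with h1 | hm1
    · exact Or.inl (isPos_of_isSquare hx ((FiniteField.isSquare_iff hchar hx).mpr h1))
    · right
      refine isPos_of_isSquare (neg_ne_zero.mpr hx) ?_
      rw [FiniteField.isSquare_iff hchar (neg_ne_zero.mpr hx)]
      have hodd : Odd (Fintype.card F / 2) := by rw [Nat.odd_iff]; omega
      rw [neg_pow, hm1, hodd.neg_one_pow]
      ring

lemma sq_sub_sq_ne (hq : Even (Fintype.card F) ∨ Fintype.card F % 4 = 3)
    {a b : F} (ha : IsPos a) (hb : IsPos b) (hab : a ≠ b) : a * a - b * b ≠ 0 := by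
  have h1 : a - b ≠ 0 := sub_ne_zero.mpr hab
  have h2 : a + b ≠ 0 := by
    intro h
    rcases hq with he | h3
    · have hchar : ringChar F = 2 :=
        FiniteField.even_card_iff_char_two.mpr (Nat.even_iff.mp he)
      have h2z : (2 : F) = 0 := by
        have hcast := ringChar.Nat.cast_ringChar (R := F)
        rw [hchar] at hcast
        exact_mod_cast hcast
      exact hab (by linear_combination h - b * h2z)
    · have hm1 : IsPos (-1 : F) := by
        have hP := ha.mul_s13 hb.inv
        have hab' : a = -b := eq_neg_of_add_eq_zero_left h
        rwa [hab', neg_mul, mul_inv_cancel₀ (isPos_ne_zero hb)] at hP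
      obtain ⟨y, hy, hysq⟩ := hm1
      have : IsSquare (-1 : F) := ⟨y, by rw [← hysq]; ring⟩
      exact (FiniteField.isSquare_neg_one_iff.mp this) h3
  intro h
  exact (mul_ne_zero h1 h2) (by linear_combination h)

end Aux2


/-- if `q` is even or `q ≡ 3 (mod 4)` and `f` preserves positivity on
`M_2(F_q)`, then `f` restricts to a bijection of `F_q⁺` onto itself and `f 0 = 0`. -/
theorem stmt13 {F : Type*} [Field F] [Fintype F]
    (hq : Even (Fintype.card F) ∨ Fintype.card F % 4 = 3) (f : F → F)
    (hpres : PreservesPos 2 f) :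
    Set.BijOn f {x : F | IsPos x} {x : F | IsPos x} ∧ f 0 = 0 := by
  have maps : Set.MapsTo f {x : F | IsPos x} {x : F | IsPos x} := by
    intro a ha
    have hd : IsPos (a * a - 0 * 0) := by simpa using ha.mul_s13 ha
    exact (key hpres ha hd).1
  have inj : Set.InjOn f {x : F | IsPos x} := by
    intro a ha b hb hfab
    by_contra hne
    have hd := sq_sub_sq_ne hq ha hb hne
    rcases dich hq hd with hp | hp
    · have h := (key hpres ha hp).2
      rw [hfab, sub_self] at h
      exact not_isPos_zero h
    · have hp' : IsPos (b * b - a * a) := by rwa [neg_sub] at hp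
      have h := (key hpres hb hp').2
      rw [hfab, sub_self] at h
      exact not_isPos_zero h
  have bij : Set.BijOn f {x : F | IsPos x} {x : F | IsPos x} :=
    ((Set.toFinite _).injOn_iff_bijOn_of_mapsTo maps).mp inj
  refine ⟨bij, ?_⟩
  by_contra hf0
  have hkey : ∀ a : F, IsPos a → IsPos (f a * f a - f 0 * f 0) := by
    intro a ha
    have hd : IsPos (a * a - 0 * 0) := by simpa using ha.mul_s13 ha
    exact (key hpres ha hd).2
  rcases dich hq hf0 with hp | hp
  · obtain ⟨a, ha, hfa⟩ := bij.surjOn hp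
    have h := hkey a ha
    rw [hfa, sub_self] at h
    exact not_isPos_zero h
  · obtain ⟨a, ha, hfa⟩ := bij.surjOn hp
    have h := hkey a ha
    rw [hfa, neg_mul_neg, sub_self] at h
    exact not_isPos_zero h
end

section
/- Let q = r^2 where r is a prime power with r ≡ 1 (mod 4), and let F_r denote the unique subfield of F_q with r elements (the fixed field of x ↦ x^r). Suppose u, v ∈ F_q \ F_r are such that for every x ∈ F_r, u − x is a nonzero square in F_q if and only if v − x is a nonzero square in F_q (i.e., u and v have the same F_r-neighborhood in the Paley graph P(q)). Then v = u or v = u^r. -/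
/-! For `w ∉ F_r` and `x ∈ F_r`, the norm `(w - x) ^ (r + 1) = (x - w) (x - w ^ r)` is the
value at `x` of the monic quadratic `f_w = (X - w) (X - w ^ r) ∈ F_r[X]`, and `w - x` is a square
in `F_q` iff its norm is a square in `F_r` (Euler's criterion in both fields). So the hypothesis
says that `f_v(x) / f_u(x)` is a nonzero square for every `x ∈ F_r`: the curve
`y² f_u(x) = f_v(x)` has exactly `2r` points over `F_r`. Counted by `y` instead, each `y² ≠ 1`
contributes at most two points and, unless `f_u = f_v`, each of `y = ±1` at most one, which gives
at most `2r - 2`. Hence `f_u = f_v`, and `v` is a root of `f_u`. -/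

open Polynomial Finset

lemma isPos_iff {F : Type*} [Field F] {x : F} : IsPos x ↔ x ≠ 0 ∧ IsSquare x := by
  constructor
  · rintro ⟨y, hy, rfl⟩
    exact ⟨pow_ne_zero 2 hy, y, sq y⟩
  · rintro ⟨hx, y, rfl⟩
    exact ⟨y, left_ne_zero_of_mul hx, sq y⟩

section FiniteField

variable {K : Type*} [Field K] [Fintype K]

lemma card_filter_sq_eq_sq [DecidableEq K] (hK : ringChar K ≠ 2) {a : K} (ha : a ≠ 0) :
    #{y | y ^ 2 = a ^ 2} = 2 := by
  have hpair : ({y | y ^ 2 = a ^ 2} : Finset K) = {a, -a} := by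
    ext y
    simp [sq_eq_sq_iff_eq_or_eq_neg]
  rw [hpair, card_pair]
  intro h
  exact ha (mul_eq_zero.mp (show (2 : K) * a = 0 by linear_combination h) |>.resolve_left
    (Ring.two_ne_zero hK))

lemma card_filter_eval_eq_zero_le [DecidableEq K] {f : K[X]} (hf : f ≠ 0) :
    #{x | f.eval x = 0} ≤ f.natDegree :=
  card_le_degree_of_subset_roots fun x hx => by simpa [mem_roots hf] using hx

lemma exists_sq_mul_eq_of_isSquare_iff {a b : K} (ha : a ≠ 0) (hb : b ≠ 0)
    (hab : IsSquare a ↔ IsSquare b) : ∃ y ≠ 0, y ^ 2 * a = b := by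
  classical
  obtain ⟨c, hc⟩ : IsSquare (a * b) := by
    rw [← quadraticChar_one_iff_isSquare (mul_ne_zero ha hb), map_mul]
    by_cases hsq : IsSquare a
    · rw [(quadraticChar_one_iff_isSquare ha).mpr hsq,
        (quadraticChar_one_iff_isSquare hb).mpr (hab.mp hsq), one_mul]
    · rw [quadraticChar_neg_one_iff_not_isSquare.mpr hsq,
        quadraticChar_neg_one_iff_not_isSquare.mpr (hab.not.mp hsq)]
      rfl
  have hc0 : c ≠ 0 := by rintro rfl; exact mul_ne_zero ha hb (by simpa using hc)
  refine ⟨c / a, div_ne_zero hc0 ha, ?_⟩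
  field_simp
  linear_combination -hc

namespace Polynomial.IsMonicOfDegree

variable {f g : K[X]}

lemma card_filter_sq_mul_eval_eq_le [DecidableEq K] (hf : IsMonicOfDegree f 2)
    (hg : IsMonicOfDegree g 2) {y : K} (hy : y ^ 2 ≠ 1) :
    #{x | y ^ 2 * f.eval x = g.eval x} ≤ 2 := by
  have hne : C (y ^ 2) * f - g ≠ 0 := by
    intro h
    have hf2 : f.coeff 2 = 1 := hf.natDegree_eq ▸ hf.monic.coeff_natDegree
    have hg2 : g.coeff 2 = 1 := hg.natDegree_eq ▸ hg.monic.coeff_natDegree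
    have h2 := congrArg (coeff · 2) h
    simp only [coeff_sub, coeff_C_mul, coeff_zero, hf2, hg2] at h2
    exact hy (by linear_combination h2)
  calc #{x | y ^ 2 * f.eval x = g.eval x} = #{x | (C (y ^ 2) * f - g).eval x = 0} := by
        simp [sub_eq_zero]
    _ ≤ (C (y ^ 2) * f - g).natDegree := card_filter_eval_eq_zero_le hne
    _ ≤ 2 := natDegree_sub_le_of_le ((natDegree_C_mul_le _ _).trans hf.natDegree_eq.le)
        hg.natDegree_eq.le

lemma card_filter_eval_eq_le_one [DecidableEq K] (hf : IsMonicOfDegree f 2)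
    (hg : IsMonicOfDegree g 2) (hfg : f ≠ g) : #{x | f.eval x = g.eval x} ≤ 1 := by
  calc #{x | f.eval x = g.eval x} = #{x | (f - g).eval x = 0} := by simp [sub_eq_zero]
    _ ≤ (f - g).natDegree := card_filter_eval_eq_zero_le (sub_ne_zero.mpr hfg)
    _ ≤ 1 := Nat.lt_succ_iff.mp (hf.natDegree_sub_lt two_ne_zero hg)

theorem eq_of_forall_exists_sq_mul_eval_eq (hK : ringChar K ≠ 2) (hf : IsMonicOfDegree f 2)
    (hg : IsMonicOfDegree g 2) (hf0 : ∀ x, f.eval x ≠ 0)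
    (hfg : ∀ x, ∃ y ≠ 0, y ^ 2 * f.eval x = g.eval x) : f = g := by
  classical
  by_contra hne
  have hfiber (x : K) : #{y | y ^ 2 * f.eval x = g.eval x} = 2 := by
    obtain ⟨y₀, hy₀, hx⟩ := hfg x
    refine (congrArg card (filter_congr fun y _ => ?_)).trans (card_filter_sq_eq_sq hK hy₀)
    rw [← hx, mul_left_inj' (hf0 x)]
  have hcount := sum_card_bipartiteAbove_eq_sum_card_bipartiteBelow (s := univ) (t := univ)
    (r := fun x y => y ^ 2 * f.eval x = g.eval x)
  simp only [bipartiteAbove, bipartiteBelow, hfiber, sum_const, card_univ, smul_eq_mul] at hcount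
  rw [← sum_filter_add_sum_filter_not univ (fun y : K => y ^ 2 = 1)] at hcount
  have hone := sum_le_card_nsmul {y : K | y ^ 2 = 1}
    (fun y => #{x | y ^ 2 * f.eval x = g.eval x}) 1 fun y hy => by
      simp only [(mem_filter.mp hy).2, one_mul]
      exact hf.card_filter_eval_eq_le_one hg hne
  have htwo := sum_le_card_nsmul {y : K | ¬y ^ 2 = 1}
    (fun y => #{x | y ^ 2 * f.eval x = g.eval x}) 2 fun y hy =>
    hf.card_filter_sq_mul_eval_eq_le hg (mem_filter.mp hy).2
  have hroots : #{y : K | y ^ 2 = 1} = 2 := by simpa using card_filter_sq_eq_sq hK one_ne_zero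
  have hsplit := card_filter_add_card_filter_not (s := (univ : Finset K)) (fun y => y ^ 2 = 1)
  simp only [smul_eq_mul, card_univ] at hone htwo hsplit
  omega

end Polynomial.IsMonicOfDegree

end FiniteField

lemma isSquare_iff_isSquare_of_coe_eq_pow {F : Type*} [Field F] [Fintype F] {K : Subfield F}
    [Fintype K] (hF : ringChar F ≠ 2) (hcard : Fintype.card F = Fintype.card K ^ 2) {z : F}
    (hz : z ≠ 0) {n : K} (hn : (n : F) = z ^ (Fintype.card K + 1)) :
    IsSquare z ↔ IsSquare n := by
  set q := Fintype.card K
  have hq : q % 2 = 1 := by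
    have := FiniteField.even_card_iff_char_two.not.mp hF
    rw [hcard, Nat.pow_mod] at this
    rcases Nat.mod_two_eq_zero_or_one q with h | h <;> simp_all
  have hK : ringChar K ≠ 2 := by
    rw [Ne, FiniteField.even_card_iff_char_two]; omega
  have hn0 : n ≠ 0 := by
    rintro rfl
    exact hz (by simpa using hn.symm)
  -- Euler's criterion in `F` and in `K`: the exponents agree because `q` is odd.
  have hexp : q ^ 2 / 2 = (q + 1) * (q / 2) := by
    obtain ⟨k, hk⟩ : ∃ k, q = 2 * k + 1 := ⟨q / 2, by omega⟩
    have hsq : q ^ 2 = 2 * ((q + 1) * k) + 1 := by rw [hk]; ring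
    rw [show q / 2 = k by omega]
    omega
  rw [FiniteField.isSquare_iff hF hz, FiniteField.isSquare_iff hK hn0, hcard, hexp, pow_mul,
    ← hn]
  norm_cast

section PowFixedSubfield

variable {F : Type*} [Field F] {p m : ℕ}

variable (F p m) in
def powFixedSubfield [ExpChar F p] : Subfield F :=
  (iterateFrobenius F p m).eqLocusField (RingHom.id F)

lemma mem_powFixedSubfield [ExpChar F p] {x : F} :
    x ∈ powFixedSubfield F p m ↔ x ^ p ^ m = x := Iff.rfl

lemma pow_pow_eq_self_of_card_eq_sq [Fintype F] {q : ℕ} (hcard : Fintype.card F = q ^ 2)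
    (x : F) : (x ^ q) ^ q = x := by
  rw [← pow_mul, ← sq, ← hcard, FiniteField.pow_card]

lemma X_pow_sub_X_dvd_X_pow_sq_sub_X [CharP F p] [Fact p.Prime] :
    (X ^ p ^ m - X : F[X]) ∣ X ^ (p ^ m) ^ 2 - X := by
  have hfrob : (X ^ p ^ m - X : F[X]) ^ p ^ m = X ^ (p ^ m) ^ 2 - X ^ p ^ m := by
    rw [sub_pow_expChar_pow, ← pow_mul, sq]
  rw [show (X ^ (p ^ m) ^ 2 - X : F[X]) = (X ^ p ^ m - X) ^ p ^ m + (X ^ p ^ m - X) by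
    rw [hfrob]; ring]
  exact (dvd_pow_self _ (pow_ne_zero _ (Fact.out : p.Prime).ne_zero)).add dvd_rfl

lemma natCard_powFixedSubfield [Finite F] [CharP F p] [Fact p.Prime]
    (hcard : Nat.card F = (p ^ m) ^ 2) :
    Nat.card (powFixedSubfield F p m) = p ^ m := by
  have hq : 1 < p ^ m :=
    lt_of_pow_lt_pow_left₀ 2 (by positivity)
      (by rw [one_pow, ← hcard]; exact Finite.one_lt_card)
  have hm : m ≠ 0 := by rintro rfl; simp at hq
  have hne : (X ^ p ^ m - X : F[X]) ≠ 0 := FiniteField.X_pow_card_sub_X_ne_zero F hq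
  have hsplit : Splits (X ^ p ^ m - X : F[X]) :=
    (hcard ▸ splits_X_pow_nat_card_sub_X).of_dvd
      (FiniteField.X_pow_card_sub_X_ne_zero F (by nlinarith)) X_pow_sub_X_dvd_X_pow_sq_sub_X
  have hroots := card_rootSet_eq_natDegree (K := F)
    (galois_poly_separable (K := F) p (p ^ m) (dvd_pow_self p hm)) (by simpa using hsplit)
  rw [FiniteField.X_pow_card_sub_X_natDegree_eq F hq, ← Nat.card_eq_fintype_card] at hroots
  rw [← hroots]
  exact Nat.card_congr (Equiv.subtypeEquivRight fun x => by
    simp [mem_rootSet_of_ne hne, mem_powFixedSubfield, sub_eq_zero])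

lemma exists_isMonicOfDegree_map_eq_X_sub_C_mul_X_sub_C [Fintype F] [CharP F p] [Fact p.Prime]
    (hcard : Fintype.card F = (p ^ m) ^ 2) (w : F) :
    ∃ f : (powFixedSubfield F p m)[X], IsMonicOfDegree f 2 ∧
      f.map (algebraMap _ F) = (X - C w) * (X - C (w ^ p ^ m)) := by
  have hpow := pow_pow_eq_self_of_card_eq_sq hcard
  let t : powFixedSubfield F p m :=
    ⟨w + w ^ p ^ m, by rw [mem_powFixedSubfield, add_pow_expChar_pow, hpow, add_comm]⟩
  let n : powFixedSubfield F p m :=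
    ⟨w * w ^ p ^ m, by rw [mem_powFixedSubfield, mul_pow, hpow, mul_comm]⟩
  refine ⟨X ^ 2 - C t * X + C n, isMonicOfDegree_sub_add_two t n, ?_⟩
  simp [t, n, Algebra.algebraMap_ofSubsemiring_apply]
  ring

variable [CharP F p] [Fact p.Prime] {w : F} {f : (powFixedSubfield F p m)[X]}

lemma coe_eval_eq_sub_pow (hf : f.map (algebraMap _ F) = (X - C w) * (X - C (w ^ p ^ m)))
    (x : powFixedSubfield F p m) : (↑(f.eval x) : F) = (w - x) ^ (p ^ m + 1) := by
  have hx : (x : F) ^ p ^ m = x := mem_powFixedSubfield.mp x.2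
  have hfx := congrArg (eval (algebraMap _ F x)) hf
  rw [eval_map_algebraMap, aeval_algebraMap_apply] at hfx
  simp only [eval_mul, eval_sub, eval_X, eval_C, Algebra.algebraMap_ofSubsemiring_apply,
    coe_aeval_eq_eval] at hfx
  rw [hfx, pow_succ, sub_pow_expChar_pow, hx]
  ring

lemma eval_ne_zero_of_map_eq (hw : w ^ p ^ m ≠ w)
    (hf : f.map (algebraMap _ F) = (X - C w) * (X - C (w ^ p ^ m))) (x : powFixedSubfield F p m) :
    f.eval x ≠ 0 := by
  have hwx : w - x ≠ 0 := sub_ne_zero.mpr fun h => hw (h ▸ x.2)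
  intro h
  exact pow_ne_zero _ hwx (by rw [← coe_eval_eq_sub_pow hf, h]; rfl)

lemma isPos_sub_iff_isSquare_eval [Fintype F] (hF : ringChar F ≠ 2)
    (hcard : Fintype.card F = (p ^ m) ^ 2) (hw : w ^ p ^ m ≠ w)
    (hf : f.map (algebraMap _ F) = (X - C w) * (X - C (w ^ p ^ m))) (x : powFixedSubfield F p m) :
    IsPos (w - x) ↔ IsSquare (f.eval x) := by
  let _ := Fintype.ofFinite (powFixedSubfield F p m)
  have hK : Fintype.card (powFixedSubfield F p m) = p ^ m := by
    rw [← Nat.card_eq_fintype_card,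
      natCard_powFixedSubfield (by rw [Nat.card_eq_fintype_card, hcard])]
  have hwx : w - x ≠ 0 := sub_ne_zero.mpr fun h => hw (h ▸ x.2)
  rw [isPos_iff, and_iff_right hwx]
  exact isSquare_iff_isSquare_of_coe_eq_pow hF (by rw [hK, hcard]) hwx
    (hK ▸ coe_eval_eq_sub_pow hf x)

end PowFixedSubfield

theorem stmt18_general {F : Type*} [Field F] [Fintype F] (r : ℕ)
    (hr4 : r % 4 = 1) (hcard : Fintype.card F = r ^ 2) (u v : F)
    (hu : u ^ r ≠ u) (hv : v ^ r ≠ v)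
    (hnbhd : ∀ x : F, x ^ r = x → (IsPos (u - x) ↔ IsPos (v - x))) :
    v = u ∨ v = u ^ r := by
  obtain ⟨p, _, n, hp, hpn⟩ := FiniteField.card' F
  have := Fact.mk hp
  obtain ⟨m, -, rfl⟩ :=
    (Nat.dvd_prime_pow hp).mp (hpn ▸ hcard ▸ Dvd.intro_left _ (sq r).symm)
  have hodd : (p ^ m) % 2 = 1 := by omega
  have hF : ringChar F ≠ 2 := by
    rw [Ne, FiniteField.even_card_iff_char_two, hcard, Nat.pow_mod, hodd]
    decide
  set K := powFixedSubfield F p m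
  let : Fintype K := Fintype.ofFinite K
  have hK : ringChar K ≠ 2 := by
    rw [Ne, FiniteField.even_card_iff_char_two, ← Nat.card_eq_fintype_card,
      natCard_powFixedSubfield (by rw [Nat.card_eq_fintype_card, hcard]), hodd]
    decide
  obtain ⟨f, hf, hfu⟩ := exists_isMonicOfDegree_map_eq_X_sub_C_mul_X_sub_C hcard u
  obtain ⟨g, hg, hgv⟩ := exists_isMonicOfDegree_map_eq_X_sub_C_mul_X_sub_C hcard v
  have hfg : f = g := hf.eq_of_forall_exists_sq_mul_eval_eq hK hg (eval_ne_zero_of_map_eq hu hfu)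
    fun x => exists_sq_mul_eq_of_isSquare_iff (eval_ne_zero_of_map_eq hu hfu x)
      (eval_ne_zero_of_map_eq hv hgv x) (by
        rw [← isPos_sub_iff_isSquare_eval hF hcard hu hfu,
          ← isPos_sub_iff_isSquare_eval hF hcard hv hgv]
        exact hnbhd x x.2)
  have hv_root := congrArg (aeval v) hfg
  rw [← eval_map_algebraMap, ← eval_map_algebraMap, hfu, hgv] at hv_root
  simpa [sub_eq_zero] using hv_root

/-- let `q = r²` with `r ≡ 1 (mod 4)` a prime power, and let
`F_r = {x : x^r = x}` be the subfield with `r` elements. If `u, v ∉ F_r` have the same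
`F_r`-neighborhood in the Paley graph `P(q)` (i.e. for every `x ∈ F_r`, `u − x` is a
nonzero square iff `v − x` is), then `v = u` or `v = u^r`. -/
theorem stmt18 {F : Type*} [Field F] [Fintype F] (r : ℕ) (hr : IsPrimePow r)
    (hr4 : r % 4 = 1) (hcard : Fintype.card F = r ^ 2) (u v : F)
    (hu : u ^ r ≠ u) (hv : v ^ r ≠ v)
    (hnbhd : ∀ x : F, x ^ r = x → (IsPos (u - x) ↔ IsPos (v - x))) :
    v = u ∨ v = u ^ r :=
  stmt18_general r hr4 hcard u v hu hv hnbhd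
end
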